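/- Let (T,G) be a graph-partitioned matrix with G = (V,E) a finite connected acyclic undirected graph, and let c > 0. Then (T,G) satisfies the GIRS property with constant c (i.e., rank T⟨Ā,A⟩ ≤ c · E(A) for all A ⊆ V) if and only if T admits a TSS representation on G with rank profile ρ satisfying ρ(e) ≤ c for every directed edge e. -/

import Mathlib

/-!
If `T` has a TSS representation, a Hankel block `T⟨Ā,A⟩` factors through the border edges of `A`:
for `j ∈ A` and `i ∉ A`, split the path from `j` to `i` at its last edge `(a,b)` leaving `A`; there
the product along the path splits as a matrix with `ρ(a,b)` columns times one with `ρ(a,b)` rows,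
so the rank is at most `∑ ρ(a,b) ≤ c · E(A)`.

Conversely, the component `side G j k` of `j` after deleting the edge `(j,k)` has a single border
edge, so the unit Hankel block `H(j,k)` has rank at most `c`. Factor it as `O(j,k) · I(j,k)` with
`I(j,k) R(j,k) = 1` and set `Inp^j_k = I(j,k)|_j`, `Out^k_i = O(i,k)|_k` and
`Trans^k_{i,j} = I(k,i)|_{side G j k} · R(j,k)`, which makes sense as `side G j k ⊆ side G k i`.
Then `O(k,i) · Trans^k_{i,j}` is a row block of `O(j,k)`, so along a path leaving `j` through `k`
the products `Out ⋯ Trans` are row blocks of `O(j,k)`, and `T⟨i,j⟩` is a block of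
`O(j,k) · I(j,k) = H(j,k)`.
-/

open Matrix

attribute [local instance] Classical.propDecidable

namespace TSS

variable {F : Type*} [Field F] {V : Type*} [Fintype V] [DecidableEq V]

/-- The `(i,j)` block of a graph-partitioned matrix. -/
def blockOf {m n : V → ℕ} (T : Matrix ((i : V) × Fin (m i)) ((j : V) × Fin (n j)) F)
    (i j : V) : Matrix (Fin (m i)) (Fin (n j)) F :=
  fun a b => T ⟨i, a⟩ ⟨j, b⟩

/-- The submatrix `T⟨A,B⟩` of a graph-partitioned matrix. -/
def subBlock {m n : V → ℕ} (T : Matrix ((i : V) × Fin (m i)) ((j : V) × Fin (n j)) F)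
    (A B : Set V) :
    Matrix {p : (i : V) × Fin (m i) // p.1 ∈ A} {q : (j : V) × Fin (n j) // q.1 ∈ B} F :=
  T.submatrix (fun p => p.1) (fun q => q.1)

/-- The Hankel block `T⟨Ā,A⟩` induced by `A`. -/
def hankelBlock {m n : V → ℕ} (T : Matrix ((i : V) × Fin (m i)) ((j : V) × Fin (n j)) F)
    (A : Set V) :
    Matrix {p : (i : V) × Fin (m i) // p.1 ∈ Aᶜ} {q : (j : V) × Fin (n j) // q.1 ∈ A} F :=
  subBlock T Aᶜ A

/-- The number of border edges of `A`: edges of `G` with one endpoint in `A` and the other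
outside of `A` (each such undirected edge is counted once, via its orientation out of `A`). -/
noncomputable def edgeCount (G : SimpleGraph V) (A : Set V) : ℕ :=
  Nat.card {e : V × V // e.1 ∈ A ∧ e.2 ∉ A ∧ G.Adj e.1 e.2}

/-- The vertex set of the connected component containing `i` after deleting the edge `{i,j}`. -/
def side (G : SimpleGraph V) (i j : V) : Set V :=
  {v | (G.deleteEdges {s(i, j)}).Reachable i v}

/-- The unit Hankel block associated with the directed edge `(i,j)`. -/
def unitHankel (G : SimpleGraph V) {m n : V → ℕ}
    (T : Matrix ((i : V) × Fin (m i)) ((j : V) × Fin (n j)) F) (i j : V) :=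
  hankelBlock T (side G i j)

/-- `outChain Out Trans k i w j` is the product
`Out^i_{p_{ν−1}} · Trans^{p_{ν−1}}_{i,p_{ν−2}} ⋯ Trans^{k}_{p₁,j}` along the walk
`w : k = p₀ − p₁ − ⋯ − p_ν = i`, with incoming edge `(j,k)`. -/
noncomputable def outChain {G : SimpleGraph V} {m : V → ℕ} {ρ : V → V → ℕ}
    (Out : ∀ k i : V, Matrix (Fin (m k)) (Fin (ρ i k)) F)
    (Trans : ∀ k i j : V, Matrix (Fin (ρ k i)) (Fin (ρ j k)) F) :
    ∀ (k i : V), G.Walk k i → ∀ j : V, Matrix (Fin (m i)) (Fin (ρ j k)) F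
  | k, _, .nil, j => Out k j
  | k, _, .cons (v := k') _ w, j => outChain Out Trans k' _ w k * Trans k k' j

/-- `pathMatrix Inp Trans Out j i w` is the product
`Out^i_{p_{ν−1}} · Trans^{p_{ν−1}}_{i,p_{ν−2}} ⋯ Trans^{p₁}_{p₂,j} · Inp^j_{p₁}` along the
walk `w : j = p₀ − p₁ − ⋯ − p_ν = i` (and junk `0` for the empty walk). -/
noncomputable def pathMatrix {G : SimpleGraph V} {m n : V → ℕ} {ρ : V → V → ℕ}
    (Inp : ∀ k j : V, Matrix (Fin (ρ k j)) (Fin (n k)) F)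
    (Trans : ∀ k i j : V, Matrix (Fin (ρ k i)) (Fin (ρ j k)) F)
    (Out : ∀ k i : V, Matrix (Fin (m k)) (Fin (ρ i k)) F) :
    ∀ (j i : V), G.Walk j i → Matrix (Fin (m i)) (Fin (n j)) F
  | _, _, .nil => 0
  | j, i, .cons (v := p1) _ w => outChain Out Trans p1 i w j * Inp j p1

/-- A TSS representation of the graph-partitioned matrix `T` on the tree `G`, with
output dimensions `m`, input dimensions `n` and rank profile `ρ` (only the values of the
generators and of `ρ` on (pairs of adjoining) directed edges of `G` are relevant). -/
structure TSSRepr (G : SimpleGraph V) (m n : V → ℕ) (ρ : V → V → ℕ)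
    (T : Matrix ((i : V) × Fin (m i)) ((j : V) × Fin (n j)) F) where
  D : ∀ k : V, Matrix (Fin (m k)) (Fin (n k)) F
  Inp : ∀ k j : V, Matrix (Fin (ρ k j)) (Fin (n k)) F
  Trans : ∀ k i j : V, Matrix (Fin (ρ k i)) (Fin (ρ j k)) F
  Out : ∀ k i : V, Matrix (Fin (m k)) (Fin (ρ i k)) F
  diag : ∀ i : V, blockOf T i i = D i
  offdiag : ∀ {i j : V}, i ≠ j → ∀ w : G.Walk j i, w.IsPath →
      blockOf T i j = pathMatrix Inp Trans Out j i w

end TSS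

theorem Matrix.exists_rank_factorization {F α β : Type*} [Field F] [Fintype β] [DecidableEq β]
    (M : Matrix α β F) :
    ∃ (O : Matrix α (Fin M.rank) F) (I : Matrix (Fin M.rank) β F) (R : Matrix β (Fin M.rank) F),
      M = O * I ∧ I * R = 1 := by
  let e : LinearMap.range M.mulVecLin ≃ₗ[F] (Fin M.rank → F) := (Module.finBasis F _).equivFun
  let I := e.toLinearMap ∘ₗ M.mulVecLin.rangeRestrict
  obtain ⟨R, hR⟩ := I.exists_rightInverse_of_surjective <| by
    rw [LinearMap.range_comp, LinearMap.range_rangeRestrict, Submodule.map_top, LinearEquiv.range]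
  refine ⟨LinearMap.toMatrix' ((LinearMap.range M.mulVecLin).subtype ∘ₗ e.symm.toLinearMap),
    LinearMap.toMatrix' I, LinearMap.toMatrix' R, ?_, ?_⟩
  · rw [← LinearMap.toMatrix'_comp]
    convert (LinearMap.toMatrix'_toLin' M).symm
    refine LinearMap.ext fun v => ?_
    simp [I, Matrix.toLin'_apply']
  · rw [← LinearMap.toMatrix'_comp, hR, LinearMap.toMatrix'_id]

theorem List.find?_reverse_append_cons {α : Type*} {p : α → Bool} {l₁ l₂ : List α} {x : α}
    (hx : p x) (h : ∀ y ∈ l₂, ¬p y) : (l₁ ++ x :: l₂).reverse.find? p = some x := by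
  have hnone : l₂.reverse.find? p = none := List.find?_eq_none.2 (by simpa using h)
  simp [List.find?_append, hnone, hx]

namespace SimpleGraph.Walk

variable {V : Type*} {G : SimpleGraph V} {A : Set V}

theorem exists_last_exit {u v : V} (w : G.Walk u v) (hv : v ∉ A) (hA : ∃ x ∈ w.support, x ∈ A) :
    ∃ (a b : V) (hab : G.Adj a b) (w₁ : G.Walk u a) (w₂ : G.Walk b v),
      w = w₁.append (cons hab w₂) ∧ a ∈ A ∧ ∀ y ∈ w₂.support, y ∉ A := by
  induction w with
  | nil => simp_all
  | @cons u u' v h w ih =>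
    by_cases hw : ∃ y ∈ w.support, y ∈ A
    · obtain ⟨a, b, hab, w₁, w₂, rfl, ha, hw₂⟩ := ih hv hw
      exact ⟨a, b, hab, cons h w₁, w₂, rfl, ha, hw₂⟩
    · push Not at hw
      have hu : u ∈ A := by
        obtain ⟨x, hx, hxA⟩ := hA
        rcases List.mem_cons.1 (support_cons h w ▸ hx) with rfl | hx
        exacts [hxA, absurd hxA (hw x hx)]
      exact ⟨u, u', h, nil, w, rfl, hu, hw⟩

theorem last_exit_unique {u v a b a' b' : V} {hab : G.Adj a b} {hab' : G.Adj a' b'}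
    {w₁ : G.Walk u a} {w₂ : G.Walk b v} {w₁' : G.Walk u a'} {w₂' : G.Walk b' v}
    (h : w₁.append (cons hab w₂) = w₁'.append (cons hab' w₂')) (ha : a ∈ A) (ha' : a' ∈ A)
    (hw₂ : ∀ y ∈ w₂.support, y ∉ A) (hw₂' : ∀ y ∈ w₂'.support, y ∉ A) : a = a' ∧ b = b' := by
  have key : ∀ {a b : V} (hab : G.Adj a b) (w₁ : G.Walk u a) (w₂ : G.Walk b v), a ∈ A →
      (∀ y ∈ w₂.support, y ∉ A) →
      (w₁.append (cons hab w₂)).darts.reverse.find? (fun d => decide (d.fst ∈ A)) =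
        some ⟨(a, b), hab⟩ :=
    fun hab w₁ w₂ ha hw₂ => by
      rw [darts_append, darts_cons]
      exact List.find?_reverse_append_cons (by simpa using ha)
        fun d hd => by simpa using hw₂ _ (w₂.dart_fst_mem_support_of_mem_darts hd)
  have := (key hab w₁ w₂ ha hw₂).symm.trans (h ▸ key hab' w₁' w₂' ha' hw₂')
  simpa [Dart.ext_iff] using this

end SimpleGraph.Walk

namespace TSS

open SimpleGraph

variable {F : Type*} [Field F] {V : Type*}

section Side

variable {G : SimpleGraph V} {i j k u v : V}

theorem mem_side_iff : v ∈ side G i j ↔ ∃ p : G.Walk i v, s(i, j) ∉ p.edges :=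
  reachable_deleteEdges_iff_exists_walk

theorem self_mem_side : i ∈ side G i j := Reachable.refl i

theorem mem_side_of_mem_support (p : G.Walk i v) (hp : s(i, j) ∉ p.edges) (hu : u ∈ p.support) :
    u ∈ side G i j :=
  mem_side_iff.2 ⟨p.takeUntil u hu, fun h => hp (p.edges_takeUntil_subset_edges hu h)⟩

theorem support_subset_side (p : G.Walk i v) (hj : j ∉ p.support) :
    ∀ u ∈ p.support, u ∈ side G i j :=
  fun _ => mem_side_of_mem_support p fun h => hj (p.snd_mem_support_of_mem_edges h)

theorem disjoint_side (hG : G.IsAcyclic) (h : G.Adj i j) : Disjoint (side G i j) (side G j i) := by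
  refine Set.disjoint_left.2 fun v hi hj => ?_
  rw [side, Sym2.eq_swap] at hj
  exact isBridge_iff.1 (isAcyclic_iff_forall_adj_isBridge.1 hG h) (hi.trans hj.symm)

theorem notMem_side (hG : G.IsAcyclic) (h : G.Adj i j) : j ∉ side G i j :=
  fun hj => Set.disjoint_left.1 (disjoint_side hG h) hj self_mem_side

theorem side_subset_side (hG : G.IsAcyclic) (hjk : G.Adj j k) (hji : j ≠ i) :
    side G j k ⊆ side G k i := by
  intro v hv
  obtain ⟨p, hp⟩ := mem_side_iff.1 hv
  have hp' : s(k, i) ∉ p.edges := fun h =>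
    notMem_side hG hjk (mem_side_of_mem_support p hp (p.fst_mem_support_of_mem_edges h))
  refine mem_side_of_mem_support (Walk.cons hjk.symm p) ?_ (Walk.cons hjk.symm p).end_mem_support
  simp [hp', hji.symm, hjk.ne']

theorem notMem_side_of_isPath (hG : G.IsAcyclic) (hjk : G.Adj j k) {w : G.Walk k i}
    (hw : (Walk.cons hjk w).IsPath) : i ∉ side G j k :=
  Set.disjoint_right.1 (disjoint_side hG hjk)
    (support_subset_side w ((Walk.cons_isPath_iff _ _).1 hw).2 i w.end_mem_support)

theorem edgeCount_side (hG : G.IsAcyclic) (h : G.Adj i j) : edgeCount G (side G i j) = 1 := by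
  refine Nat.card_eq_one_iff_exists.2 ⟨⟨(i, j), self_mem_side, notMem_side hG h, h⟩, ?_⟩
  rintro ⟨⟨a, b⟩, ha, hb, hab⟩
  by_cases he : s(a, b) = s(i, j)
  · rcases Sym2.eq_iff.1 he with ⟨rfl, rfl⟩ | ⟨rfl, rfl⟩
    · rfl
    · exact absurd ha (notMem_side hG h)
  · exact absurd (ha.trans (Adj.reachable (by simpa [deleteEdges_adj, hab] using he))) hb

theorem isPath_append_cons (hG : G.IsAcyclic) {a b : V} (hab : G.Adj a b) {p : G.Walk u a}
    {q : G.Walk b v} (hp : p.IsPath) (hq : q.IsPath) (hb : b ∉ p.support) (ha : a ∉ q.support) :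
    (p.append (Walk.cons hab q)).IsPath := by
  rw [Walk.isPath_def, Walk.support_append, Walk.support_cons, List.tail_cons]
  refine hp.support_nodup.append hq.support_nodup fun x hxp hxq => ?_
  exact Set.disjoint_left.1 (disjoint_side hG hab)
    (support_subset_side p.reverse (by simpa using hb) x (by simpa using hxp))
    (support_subset_side q ha x hxq)

noncomputable def treePath (hG : G.IsTree) (u v : V) : G.Walk u v :=
  (hG.existsUnique_path u v).exists.choose

theorem treePath_isPath (hG : G.IsTree) (u v : V) : (treePath hG u v).IsPath :=
  (hG.existsUnique_path u v).exists.choose_spec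

theorem eq_treePath (hG : G.IsTree) {p : G.Walk u v} (hp : p.IsPath) : p = treePath hG u v :=
  (hG.existsUnique_path u v).unique hp (treePath_isPath hG u v)

theorem treePath_eq_append_cons (hG : G.IsTree) {a b : V} (hab : G.Adj a b)
    (hb : b ∉ (treePath hG u a).support) (ha : a ∉ (treePath hG b v).support) :
    treePath hG u v = (treePath hG u a).append (Walk.cons hab (treePath hG b v)) :=
  (eq_treePath hG (isPath_append_cons hG.isAcyclic hab (treePath_isPath hG u a)
    (treePath_isPath hG b v) hb ha)).symm

end Side

section Realization

variable [Fintype V] {G : SimpleGraph V}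
  {m n : V → ℕ} {ρ : V → V → ℕ} (T : Matrix ((i : V) × Fin (m i)) ((j : V) × Fin (n j)) F)
  (O : ∀ j k : V, Matrix {p : (i : V) × Fin (m i) // p.1 ∈ (side G j k)ᶜ} (Fin (ρ j k)) F)
  (I : ∀ j k : V, Matrix (Fin (ρ j k)) {q : (i : V) × Fin (n i) // q.1 ∈ side G j k} F)
  (R : ∀ j k : V, Matrix {q : (i : V) × Fin (n i) // q.1 ∈ side G j k} (Fin (ρ j k)) F)

noncomputable def factorInp (k j : V) : Matrix (Fin (ρ k j)) (Fin (n k)) F :=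
  (I k j).submatrix id fun β => ⟨⟨k, β⟩, self_mem_side⟩

noncomputable def factorOut (k i : V) : Matrix (Fin (m k)) (Fin (ρ i k)) F :=
  if h : k ∉ side G i k then (O i k).submatrix (fun α => ⟨⟨k, α⟩, h⟩) id else 0

noncomputable def factorTrans (k i j : V) : Matrix (Fin (ρ k i)) (Fin (ρ j k)) F :=
  if h : side G j k ⊆ side G k i then
    ((I k i).submatrix id (fun q => ⟨q.1, h q.2⟩) :
      Matrix (Fin (ρ k i)) {q : (i : V) × Fin (n i) // q.1 ∈ side G j k} F) * R j k
  else 0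

variable {T O I R}

/-- `O j k = H(j,k) R(j,k)`, and the columns of `H(k,k')` indexed by `side G j k` form a block of
rows of `H(j,k)`. -/
theorem mul_factorTrans (hG : G.IsAcyclic)
    (hOI : ∀ j k : V, unitHankel G T j k = O j k * I j k) (hIR : ∀ j k : V, I j k * R j k = 1)
    {j k k' : V} (hjk : G.Adj j k) (hjk' : j ≠ k') :
    O k k' * factorTrans I R k k' j = (O j k).submatrix
      (fun p => ⟨p.1, Set.compl_subset_compl.2 (side_subset_side hG hjk hjk') p.2⟩) id := by
  have hO : O j k = unitHankel G T j k * R j k := by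
    rw [hOI, Matrix.mul_assoc, hIR, Matrix.mul_one]
  rw [factorTrans, dif_pos (side_subset_side hG hjk hjk'), ← Matrix.mul_assoc, hO,
    ← Matrix.submatrix_id_id (O k k'), ← Matrix.submatrix_mul _ _ _ _ _ Function.bijective_id,
    ← hOI, Matrix.submatrix_mul _ _ _ id _ Function.bijective_id, Matrix.submatrix_id_id]
  rfl

theorem outChain_factor (hG : G.IsAcyclic) (hOI : ∀ j k : V, unitHankel G T j k = O j k * I j k)
    (hIR : ∀ j k : V, I j k * R j k = 1) {k i : V} (w : G.Walk k i) {j : V} (hjk : G.Adj j k)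
    (hw : (Walk.cons hjk w).IsPath) (hi : i ∉ side G j k) :
    outChain (factorOut O) (factorTrans I R) k i w j =
      (O j k).submatrix (fun α => ⟨⟨i, α⟩, hi⟩) id := by
  induction w generalizing j with
  | nil => exact dif_pos hi
  | @cons k k' i hkk' w ih =>
    have hw' : (Walk.cons hkk' w).IsPath := hw.of_cons
    have hjk' : j ≠ k' := fun h => by subst h; simp at hw
    rw [outChain, ih hkk' hw' (notMem_side_of_isPath hG hkk' hw'),
      ← Matrix.submatrix_id_id (factorTrans I R k k' j),
      ← Matrix.submatrix_mul _ _ _ _ _ Function.bijective_id, mul_factorTrans hG hOI hIR hjk hjk']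
    rfl

noncomputable def factorRepr (hG : G.IsAcyclic)
    (hOI : ∀ j k : V, unitHankel G T j k = O j k * I j k) (hIR : ∀ j k : V, I j k * R j k = 1) :
    TSSRepr G m n ρ T where
  D k := blockOf T k k
  Inp := factorInp I
  Trans := factorTrans I R
  Out := factorOut O
  diag _ := rfl
  offdiag := by
    rintro i j hij (_ | ⟨hjk, w⟩) hw
    · exact absurd rfl hij
    · rw [pathMatrix, outChain_factor hG hOI hIR w hjk hw (notMem_side_of_isPath hG hjk hw),
        factorInp, ← Matrix.submatrix_mul _ _ _ _ _ Function.bijective_id, ← hOI]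
      rfl

theorem tss_of_girs (hG : G.IsAcyclic) {c : ℕ}
    (girs : ∀ A : Set V, (hankelBlock T A).rank ≤ c * edgeCount G A) :
    ∃ ρ : V → V → ℕ, (∀ i j : V, G.Adj i j → ρ i j ≤ c) ∧ Nonempty (TSSRepr G m n ρ T) := by
  choose O I R hOI hIR using fun j k : V => (unitHankel G T j k).exists_rank_factorization
  refine ⟨fun j k => (unitHankel G T j k).rank, fun i j hij => ?_, ⟨factorRepr hG hOI hIR⟩⟩
  simpa [unitHankel, edgeCount_side hG hij] using girs (side G i j)

end Realization

section Decomposition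

variable {G : SimpleGraph V} {m n : V → ℕ} {ρ : V → V → ℕ}
  (Inp : ∀ k j : V, Matrix (Fin (ρ k j)) (Fin (n k)) F)
  (Trans : ∀ k i j : V, Matrix (Fin (ρ k i)) (Fin (ρ j k)) F)
  (Out : ∀ k i : V, Matrix (Fin (m k)) (Fin (ρ i k)) F)

/-- The product `Trans^a_{b,p_{ν−1}} ⋯ Trans^{p₁}_{p₂,j} · Inp^j_{p₁}` along the walk
`w : j = p₀ − p₁ − ⋯ − p_ν = a`, with outgoing edge `(a,b)`; it is `outChain` with the output maps
replaced by the transitions towards `b`. -/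
noncomputable def inChain : ∀ (j a : V), G.Walk j a → ∀ b : V, Matrix (Fin (ρ a b)) (Fin (n j)) F
  | j, _, .nil, b => Inp j b
  | j, _, .cons (v := p) _ w, b =>
    outChain (m := fun x => ρ x b) (fun x y => Trans x b y) Trans p _ w j * Inp j p

theorem outChain_append {k a b i : V} (w₁ : G.Walk k a) (h : G.Adj a b) (w₂ : G.Walk b i)
    (j : V) :
    outChain Out Trans k i (w₁.append (Walk.cons h w₂)) j =
      outChain Out Trans b i w₂ a *
        outChain (m := fun x => ρ x b) (fun x y => Trans x b y) Trans k a w₁ j := by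
  induction w₁ generalizing j with
  | nil => rfl
  | cons h₁ w₁ ih => rw [Walk.cons_append, outChain, ih, Matrix.mul_assoc]; rfl

theorem pathMatrix_append {j a b i : V} (w₁ : G.Walk j a) (h : G.Adj a b) (w₂ : G.Walk b i) :
    pathMatrix Inp Trans Out j i (w₁.append (Walk.cons h w₂)) =
      outChain Out Trans b i w₂ a * inChain Inp Trans j a w₁ b := by
  cases w₁ with
  | nil => rfl
  | cons h₁ w₁ => rw [Walk.cons_append, pathMatrix, outChain_append, Matrix.mul_assoc]; rfl

end Decomposition

section Hankel

variable [Fintype V] {G : SimpleGraph V} {m n : V → ℕ}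
  {ρ : V → V → ℕ} {T : Matrix ((i : V) × Fin (m i)) ((j : V) × Fin (n j)) F}

abbrev BorderEdge (G : SimpleGraph V) (A : Set V) : Type _ :=
  {e : V × V // e.1 ∈ A ∧ e.2 ∉ A ∧ G.Adj e.1 e.2}

/- The entry for `j ∈ A`, `i ∉ A` is routed through the last edge `(a,b)` leaving `A` on the path
from `j` to `i`: the two conditions below single out that edge. -/
noncomputable def hankelFactorOut (hG : G.IsTree) (𝓡 : TSSRepr G m n ρ T) (A : Set V) :
    Matrix {p : (i : V) × Fin (m i) // p.1 ∈ Aᶜ} ((e : BorderEdge G A) × Fin (ρ e.1.1 e.1.2)) F :=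
  fun ⟨⟨i, α⟩, _⟩ ⟨⟨(a, b), _⟩, x⟩ =>
    if ∀ u ∈ (treePath hG b i).support, u ∉ A then
      outChain 𝓡.Out 𝓡.Trans b i (treePath hG b i) a α x
    else 0

noncomputable def hankelFactorIn (hG : G.IsTree) (𝓡 : TSSRepr G m n ρ T) (A : Set V) :
    Matrix ((e : BorderEdge G A) × Fin (ρ e.1.1 e.1.2)) {q : (j : V) × Fin (n j) // q.1 ∈ A} F :=
  fun ⟨⟨(a, b), _⟩, x⟩ ⟨⟨j, β⟩, _⟩ =>
    if b ∉ (treePath hG j a).support then inChain 𝓡.Inp 𝓡.Trans j a (treePath hG j a) b x β else 0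

theorem hankelBlock_eq_mul (hG : G.IsTree) (𝓡 : TSSRepr G m n ρ T) (A : Set V) :
    hankelBlock T A = hankelFactorOut hG 𝓡 A * hankelFactorIn hG 𝓡 A := by
  ext ⟨⟨i, α⟩, hi⟩ ⟨⟨j, β⟩, hj⟩
  have hij : i ≠ j := fun h => hi (h ▸ hj)
  obtain ⟨a, b, hab, w₁, w₂, hw, ha, hw₂⟩ :=
    (treePath hG j i).exists_last_exit hi ⟨j, Walk.start_mem_support _, hj⟩
  have hpath : (w₁.append (Walk.cons hab w₂)).IsPath := hw ▸ treePath_isPath hG j i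
  obtain rfl := eq_treePath hG hpath.of_append_left
  obtain rfl := eq_treePath hG hpath.of_append_right.of_cons
  have hb : b ∉ (treePath hG j a).support := fun hb =>
    hpath.ne_of_mem_support_of_append hab.ne' hb (by simp) rfl
  let e₀ : BorderEdge G A := ⟨(a, b), ha, hw₂ b (Walk.start_mem_support _), hab⟩
  rw [Matrix.mul_apply, Fintype.sum_sigma, Finset.sum_eq_single e₀]
  · calc hankelBlock T A ⟨⟨i, α⟩, hi⟩ ⟨⟨j, β⟩, hj⟩
        = pathMatrix 𝓡.Inp 𝓡.Trans 𝓡.Out j i (treePath hG j i) α β := by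
          rw [← 𝓡.offdiag hij _ (treePath_isPath hG j i)]; rfl
      _ = _ := by
          rw [hw, pathMatrix_append, Matrix.mul_apply]
          simp only [hankelFactorOut, hankelFactorIn, e₀, if_pos hw₂, if_pos hb]
  · rintro ⟨⟨a', b'⟩, ha', hb', hab'⟩ - he
    by_cases hout : ∀ u ∈ (treePath hG b' i).support, u ∉ A
    · by_cases hin : b' ∉ (treePath hG j a').support
      · obtain ⟨rfl, rfl⟩ := Walk.last_exit_unique
          ((treePath_eq_append_cons hG hab' hin fun h => hout a' h ha').symm.trans hw)
          ha' ha hout hw₂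
        exact absurd rfl he
      · simp [hankelFactorIn, hin]
    · simp [hankelFactorOut, hout]
  · simp

theorem girs_of_tss (hG : G.IsTree) (𝓡 : TSSRepr G m n ρ T) {c : ℕ}
    (hρ : ∀ i j : V, G.Adj i j → ρ i j ≤ c) (A : Set V) :
    (hankelBlock T A).rank ≤ c * edgeCount G A :=
  calc (hankelBlock T A).rank
      ≤ (hankelFactorIn hG 𝓡 A).rank := by
        rw [hankelBlock_eq_mul hG 𝓡]; exact Matrix.rank_mul_le_right _ _
    _ ≤ ∑ e : BorderEdge G A, ρ e.1.1 e.1.2 := by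
        simpa using Matrix.rank_le_card_height (hankelFactorIn hG 𝓡 A)
    _ ≤ ∑ _e : BorderEdge G A, c := Finset.sum_le_sum fun e _ => hρ _ _ e.2.2.2
    _ = c * edgeCount G A := by simp [edgeCount, Nat.card_eq_fintype_card, mul_comm]

end Hankel

theorem girs_iff_tss_general {F : Type*} [Field F] {V : Type*} [Fintype V]
    (G : SimpleGraph V) (hG : G.IsTree) (m n : V → ℕ) (c : ℕ)
    (T : Matrix ((i : V) × Fin (m i)) ((j : V) × Fin (n j)) F) :
    (∀ A : Set V, (hankelBlock T A).rank ≤ c * edgeCount G A) ↔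
      ∃ ρ : V → V → ℕ, (∀ i j : V, G.Adj i j → ρ i j ≤ c) ∧
        Nonempty (TSSRepr G m n ρ T) :=
  ⟨tss_of_girs hG.isAcyclic, fun ⟨_, hρ, ⟨𝓡⟩⟩ => girs_of_tss hG 𝓡 hρ⟩

/-- `(T,G)` satisfies the GIRS property with constant `c > 0` if and only if
`T` admits a TSS representation on `G` whose rank profile satisfies `ρ(e) ≤ c` on every
directed edge `e`. -/
theorem girs_iff_tss {F : Type*} [Field F] {V : Type*} [Fintype V] [DecidableEq V]
    (G : SimpleGraph V) (hG : G.IsTree) (m n : V → ℕ) (c : ℕ) (hc : 0 < c)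
    (T : Matrix ((i : V) × Fin (m i)) ((j : V) × Fin (n j)) F) :
    (∀ A : Set V, (hankelBlock T A).rank ≤ c * edgeCount G A) ↔
      ∃ ρ : V → V → ℕ, (∀ i j : V, G.Adj i j → ρ i j ≤ c) ∧
        Nonempty (TSSRepr G m n ρ T) :=
  girs_iff_tss_general G hG m n c T

end TSS
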